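/- Let L be a cubic algebra and let I and J be special subalgebras of L such that I ∪ J is compatible (i.e. x ∨ Δ(1, y) = 1 for all x, y ∈ I ∪ J). Then S := {f ∧ g : f ∈ I, g ∈ J, and f ∧ g exists in L} is a special subalgebra of L containing I ∪ J, and S is contained in every special subalgebra of L that contains I ∪ J; that is, S is the smallest special subalgebra containing I ∪ J. -/

import Mathlib

universe u

/-- A cubic algebra: a join-semilattice with greatest element `⊤` and a binary
operation `Δ` satisfying the axioms of Bailey–Oliveira. `dot x y` is the derived
implication operation `x·y = Δ(⊤, Δ(x ⊔ y, y)) ⊔ y`. -/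
class CubicAlgebra (L : Type u) extends SemilatticeSup L, OrderTop L where
  Δ : L → L → L
  dot : L → L → L
  dot_def : ∀ x y : L, dot x y = Δ ⊤ (Δ (x ⊔ y) y) ⊔ y
  Δ_join : ∀ x y : L, x ≤ y → Δ y x ⊔ x = y
  Δ_comp : ∀ x y z : L, x ≤ y → y ≤ z → Δ z (Δ y x) = Δ (Δ z y) (Δ z x)
  Δ_invol : ∀ x y : L, x ≤ y → Δ y (Δ y x) = x
  Δ_mono : ∀ x y z : L, x ≤ y → y ≤ z → Δ z x ≤ Δ z y
  dot_dot : ∀ x y : L, dot (dot x y) y = x ⊔ y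
  dot_exch : ∀ x y z : L, dot x (dot y z) = dot y (dot x z)

namespace CubicAlgebra

variable {L : Type u} [CubicAlgebra L]

/-- `a ∼ b` iff `Δ(a ⊔ b, a) = b`. -/
def sim (a b : L) : Prop := Δ (a ⊔ b) a = b

/-- `m` is the greatest lower bound of `a` and `b`. -/
def IsMeet (a b m : L) : Prop := m ≤ a ∧ m ≤ b ∧ ∀ c : L, c ≤ a → c ≤ b → c ≤ m

/-- A special subalgebra of a cubic algebra. -/
structure IsSpecial (S : Set L) : Prop where
  top_mem : (⊤ : L) ∈ S
  upward : ∀ x ∈ S, ∀ y : L, x ≤ y → y ∈ S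
  dot_mem : ∀ x ∈ S, ∀ y ∈ S, dot x y ∈ S
  compat : ∀ x ∈ S, ∀ y ∈ S, x ⊔ Δ ⊤ y = ⊤
  meet_mem : ∀ x ∈ S, ∀ y ∈ S, ∀ m : L, IsMeet x y m → m ∈ S

/-- `A ∨ B` for sets: all existing meets `a ∧ b`, `a ∈ A`, `b ∈ B`. -/
def svee (A B : Set L) : Set L := {z | ∃ a ∈ A, ∃ b ∈ B, IsMeet a b z}

/-- `J → I` for sets. -/
def sarrow (J I : Set L) : Set L := {h | h ∈ I ∧ ∀ g ∈ J, h ⊔ g = ⊤}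

/-- `Δ(J, I) := J ∨ Δ(⊤, J → I)`. -/
def sDelta (J I : Set L) : Set L := svee J ((fun b => Δ ⊤ b) '' sarrow J I)

/-- `I_g := {Δ(g ⊔ f, f) : f ∈ I}`. -/
def shift (I : Set L) (g : L) : Set L := {z | ∃ f ∈ I, z = Δ (g ⊔ f) f}

end CubicAlgebra

/-! For `m ≤ u, v`, the map `u ↦ u·m` is an antitone involution of the interval `[m, ⊤]`
(`(u·m)·m = u ⊔ m` together with exchange). Hence `u ∧ v` always exists and equals
`(u·m ⊔ v·m)·m`, and `m = u ∧ v` exactly when `u·m ⊔ v·m = ⊤`. This criterion yields the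
distributive law `(a ⊔ y) ∧ (b ⊔ y) = y` for `a ∧ b ≤ y`, which makes `I ∨ J` upward closed,
and shows that a meet of two elements joining `c` to `⊤` again joins `c` to `⊤`; as `Δ(⊤, -)`
is an order automorphism, this passes compatibility from `I ∪ J` to `I ∨ J`. Closure under
meets is the regrouping `(f₁ ∧ g₁) ∧ (f₂ ∧ g₂) = (f₁ ∧ f₂) ∧ (g₁ ∧ g₂)`, where the inner meets
exist because they lie above a common lower bound. -/

namespace CubicAlgebra

variable {L : Type u} [CubicAlgebra L]

lemma Δ_le {x y : L} (h : x ≤ y) : Δ y x ≤ y :=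
  le_sup_left.trans_eq (Δ_join x y h)

lemma Δ_self (x : L) : Δ x x = x := by
  have h : Δ (Δ x x) (Δ x x) = x := by rw [← Δ_comp x x x le_rfl le_rfl, Δ_invol x x le_rfl]
  exact le_antisymm (Δ_le le_rfl) (h.symm.trans_le (Δ_le le_rfl))

lemma Δ_top_le_Δ_top_iff {a b : L} : Δ ⊤ a ≤ Δ ⊤ b ↔ a ≤ b := by
  refine ⟨fun h => ?_, fun h => Δ_mono a b ⊤ h le_top⟩
  simpa only [Δ_invol _ ⊤ le_top] using Δ_mono _ _ ⊤ h le_top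

lemma le_dot (x y : L) : y ≤ dot x y := by
  rw [dot_def]; exact le_sup_right

lemma top_dot (y : L) : dot ⊤ y = y := by
  rw [dot_def, top_sup_eq, Δ_invol y ⊤ le_top, sup_idem]

lemma dot_eq_top_iff {x y : L} : dot x y = ⊤ ↔ x ≤ y := by
  refine ⟨fun h => ?_, fun h => ?_⟩
  · have h' := dot_dot x y
    rw [h, top_dot] at h'
    exact le_sup_left.trans h'.ge
  · rw [dot_def, sup_eq_right.mpr h, Δ_self, Δ_join y ⊤ le_top]

lemma dot_self (x : L) : dot x x = ⊤ := dot_eq_top_iff.mpr le_rfl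

lemma dot_dot_of_le {m u : L} (h : m ≤ u) : dot (dot u m) m = u := by
  rw [dot_dot, sup_eq_left.mpr h]

lemma dot_sup_left (x y : L) : dot (x ⊔ y) y = dot x y := by
  rw [dot_def, dot_def, sup_assoc, sup_idem]

lemma dot_le_dot_left {x x' : L} (h : x ≤ x') (y : L) : dot x' y ≤ dot x y := by
  rw [← dot_eq_top_iff, dot_exch, dot_dot]
  exact dot_eq_top_iff.mpr (h.trans le_sup_left)

lemma dot_le_dot_right (x : L) {y z : L} (h : y ≤ z) : dot x y ≤ dot x z := by
  rw [← dot_eq_top_iff, dot_exch, dot_eq_top_iff]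
  calc x ≤ x ⊔ y := le_sup_left
    _ ≤ dot (dot z y) (x ⊔ y) := le_dot _ _
    _ = dot (dot x y) z := by rw [← dot_dot x y, dot_exch, dot_dot_of_le h]

lemma dot_eq_of_sup_eq_top {a t : L} (h : a ⊔ t = ⊤) : dot t a = a :=
  le_antisymm (dot_eq_top_iff.mp (by rw [dot_dot, sup_comm, h])) (le_dot _ _)

lemma eq_top_of_dot_le {m t : L} (hmt : m ≤ t) (h : dot t m ≤ m) : t = ⊤ := by
  rw [← dot_dot_of_le hmt, le_antisymm h (le_dot _ _), dot_self]

lemma isMeet_top_left (x : L) : IsMeet ⊤ x x :=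
  ⟨le_top, le_rfl, fun _ _ h => h⟩

lemma isMeet_top_right (x : L) : IsMeet x ⊤ x :=
  ⟨le_rfl, le_top, fun _ h _ => h⟩

lemma isMeet_dot_sup_dot {m u v : L} (hu : m ≤ u) (hv : m ≤ v) :
    IsMeet u v (dot (dot u m ⊔ dot v m) m) := by
  refine ⟨(dot_le_dot_left le_sup_left m).trans (dot_dot_of_le hu).le,
    (dot_le_dot_left le_sup_right m).trans (dot_dot_of_le hv).le, fun c hcu hcv => ?_⟩
  have hcm : dot u m ⊔ dot v m ≤ dot (c ⊔ m) m :=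
    sup_le (dot_le_dot_left (sup_le hcu hu) m) (dot_le_dot_left (sup_le hcv hv) m)
  exact le_sup_left.trans ((dot_dot_of_le le_sup_right).ge.trans (dot_le_dot_left hcm m))

lemma isMeet_of_dot_sup_dot_eq_top {m u v : L} (hu : m ≤ u) (hv : m ≤ v)
    (h : dot u m ⊔ dot v m = ⊤) : IsMeet u v m := by
  simpa only [h, top_dot] using isMeet_dot_sup_dot hu hv

lemma IsMeet.dot_sup_dot_eq_top {m u v : L} (hm : IsMeet u v m) :
    dot u m ⊔ dot v m = ⊤ := by
  obtain ⟨hmu, hmv, hglb⟩ := hm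
  refine eq_top_of_dot_le ((le_dot u m).trans le_sup_left) (hglb _ ?_ ?_)
  · exact (dot_le_dot_left le_sup_left m).trans (dot_dot_of_le hmu).le
  · exact (dot_le_dot_left le_sup_right m).trans (dot_dot_of_le hmv).le

lemma IsMeet.sup_right {a b m y : L} (hm : IsMeet a b m) (hmy : m ≤ y) :
    IsMeet (a ⊔ y) (b ⊔ y) y := by
  refine isMeet_of_dot_sup_dot_eq_top le_sup_right le_sup_right (top_unique ?_)
  rw [← hm.dot_sup_dot_eq_top, dot_sup_left, dot_sup_left]
  exact sup_le_sup (dot_le_dot_right a hmy) (dot_le_dot_right b hmy)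

lemma IsMeet.sup_eq_top {a b m c : L} (hm : IsMeet a b m) (ha : a ⊔ c = ⊤)
    (hb : b ⊔ c = ⊤) : m ⊔ c = ⊤ := by
  obtain ⟨hma, hmb, hglb⟩ := hm
  have bound : ∀ {x}, m ≤ x → x ⊔ c = ⊤ → dot (m ⊔ c) m ≤ x := fun hmx hx =>
    (dot_le_dot_right _ hmx).trans_eq
      (dot_eq_of_sup_eq_top (by rw [← sup_assoc, sup_eq_left.mpr hmx, hx]))
  exact eq_top_of_dot_le le_sup_left (hglb _ (bound hma ha) (bound hmb hb))

lemma IsMeet.Δ_top {a b m : L} (hm : IsMeet a b m) : IsMeet (Δ ⊤ a) (Δ ⊤ b) (Δ ⊤ m) := by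
  obtain ⟨hma, hmb, hglb⟩ := hm
  refine ⟨Δ_top_le_Δ_top_iff.mpr hma, Δ_top_le_Δ_top_iff.mpr hmb, fun c hca hcb => ?_⟩
  rw [← Δ_invol c ⊤ le_top, Δ_top_le_Δ_top_iff] at hca hcb ⊢
  exact hglb _ hca hcb

lemma isMeet_inf_inf_inf_comm {f₁ g₁ f₂ g₂ x y w v m : L} (hx : IsMeet f₁ g₁ x)
    (hy : IsMeet f₂ g₂ y) (hw : IsMeet f₁ f₂ w) (hv : IsMeet g₁ g₂ v) (hm : IsMeet x y m) :
    IsMeet w v m :=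
  ⟨hw.2.2 m (hm.1.trans hx.1) (hm.2.1.trans hy.1),
    hv.2.2 m (hm.1.trans hx.2.1) (hm.2.1.trans hy.2.1),
    fun c hcw hcv => hm.2.2 c (hx.2.2 c (hcw.trans hw.1) (hcv.trans hv.1))
      (hy.2.2 c (hcw.trans hw.2.1) (hcv.trans hv.2.1))⟩

section svee

variable {I J : Set L}

lemma top_mem_svee (hI : IsSpecial I) (hJ : IsSpecial J) : ⊤ ∈ svee I J :=
  ⟨⊤, hI.top_mem, ⊤, hJ.top_mem, isMeet_top_left ⊤⟩

lemma union_subset_svee (hI : IsSpecial I) (hJ : IsSpecial J) : I ∪ J ⊆ svee I J := by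
  rintro z (hz | hz)
  · exact ⟨z, hz, ⊤, hJ.top_mem, isMeet_top_right z⟩
  · exact ⟨⊤, hI.top_mem, z, hz, isMeet_top_left z⟩

lemma svee_subset_of_union_subset {T : Set L} (hT : IsSpecial T) (h : I ∪ J ⊆ T) :
    svee I J ⊆ T := by
  rintro z ⟨f, hf, g, hg, hz⟩
  exact hT.meet_mem f (h (Or.inl hf)) g (h (Or.inr hg)) z hz

lemma svee_upward (hI : IsSpecial I) (hJ : IsSpecial J) {x y : L} (hx : x ∈ svee I J)
    (hxy : x ≤ y) : y ∈ svee I J := by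
  obtain ⟨f, hf, g, hg, hx⟩ := hx
  exact ⟨f ⊔ y, hI.upward f hf _ le_sup_left, g ⊔ y, hJ.upward g hg _ le_sup_left,
    hx.sup_right hxy⟩

lemma svee_compat (hcomp : ∀ x ∈ I ∪ J, ∀ y ∈ I ∪ J, x ⊔ Δ ⊤ y = ⊤) {x y : L}
    (hx : x ∈ svee I J) (hy : y ∈ svee I J) : x ⊔ Δ ⊤ y = ⊤ := by
  obtain ⟨f, hf, g, hg, hx⟩ := hx
  obtain ⟨f', hf', g', hg', hy⟩ := hy
  have hxc : ∀ c ∈ I ∪ J, x ⊔ Δ ⊤ c = ⊤ := fun c hc =>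
    hx.sup_eq_top (hcomp f (Or.inl hf) c hc) (hcomp g (Or.inr hg) c hc)
  rw [sup_comm]
  exact hy.Δ_top.sup_eq_top (by rw [sup_comm, hxc f' (Or.inl hf')])
    (by rw [sup_comm, hxc g' (Or.inr hg')])

lemma svee_meet_mem (hI : IsSpecial I) (hJ : IsSpecial J) {x y m : L} (hx : x ∈ svee I J)
    (hy : y ∈ svee I J) (hm : IsMeet x y m) : m ∈ svee I J := by
  obtain ⟨f₁, hf₁, g₁, hg₁, hx⟩ := hx
  obtain ⟨f₂, hf₂, g₂, hg₂, hy⟩ := hy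
  have hf := isMeet_dot_sup_dot (hm.1.trans hx.1) (hm.2.1.trans hy.1)
  have hg := isMeet_dot_sup_dot (hm.1.trans hx.2.1) (hm.2.1.trans hy.2.1)
  exact ⟨_, hI.meet_mem f₁ hf₁ f₂ hf₂ _ hf, _, hJ.meet_mem g₁ hg₁ g₂ hg₂ _ hg,
    isMeet_inf_inf_inf_comm hx hy hf hg hm⟩

lemma isSpecial_svee (hI : IsSpecial I) (hJ : IsSpecial J)
    (hcomp : ∀ x ∈ I ∪ J, ∀ y ∈ I ∪ J, x ⊔ Δ ⊤ y = ⊤) : IsSpecial (svee I J) where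
  top_mem := top_mem_svee hI hJ
  upward _ hx _ hxy := svee_upward hI hJ hx hxy
  dot_mem x _ _ hy := svee_upward hI hJ hy (le_dot x _)
  compat _ hx _ hy := svee_compat hcomp hx hy
  meet_mem _ hx _ hy _ hm := svee_meet_mem hI hJ hx hy hm

end svee

end CubicAlgebra

open CubicAlgebra in
/-- If `I ∪ J` is compatible then `I ∨ J = {f ∧ g : f ∈ I, g ∈ J, f ∧ g exists}`
is the smallest special subalgebra containing `I ∪ J`. -/
theorem svee_smallest_special {L : Type u} [CubicAlgebra L] (I J : Set L)
    (hI : IsSpecial I) (hJ : IsSpecial J)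
    (hcomp : ∀ x ∈ I ∪ J, ∀ y ∈ I ∪ J, x ⊔ Δ ⊤ y = ⊤) :
    IsSpecial (svee I J) ∧ I ∪ J ⊆ svee I J ∧
      ∀ T : Set L, IsSpecial T → I ∪ J ⊆ T → svee I J ⊆ T :=
  ⟨isSpecial_svee hI hJ hcomp, union_subset_svee hI hJ,
    fun _ hT h => svee_subset_of_union_subset hT h⟩
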